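/- arXiv:1902.05944 — 11 statements merged into one kernel-verified Lean document; each statement's English description precedes it below -/
import Mathlib

section
/- For every integer n ≥ 1, F_{n+1}^3 + F_n^3 - F_{n-1}^3 = F_{3n}. -/
/-!
Split `3(m+1) = (m+1) + (2m+1) + 1` and apply the addition formula
`F_{a+b+1} = F_a F_b + F_{a+1} F_{b+1}`; the doubling formulas express `F_{2m+1}` and `F_{2m+2}`
through `F_m` and `F_{m+1}`, after which the identity is a polynomial identity in `F_m, F_{m+1}`.
-/

namespace Nat

theorem fib_three_mul_add_three (m : ℕ) :
    fib (3 * m + 3) = fib (m + 1) * (fib (m + 1) ^ 2 + fib m ^ 2) +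
      fib (m + 2) * (fib (m + 1) * (2 * fib m + fib (m + 1))) := by
  rw [show 3 * m + 3 = (m + 1) + (2 * m + 1) + 1 by ring, fib_add, fib_two_mul_add_one,
    show 2 * m + 1 + 1 = 2 * m + 2 by ring, fib_two_mul_add_two]

theorem fib_add_two_pow_three_add_fib_add_one_pow_three (m : ℕ) :
    fib (m + 2) ^ 3 + fib (m + 1) ^ 3 = fib (3 * m + 3) + fib m ^ 3 := by
  rw [fib_three_mul_add_three, fib_add_two]
  ring

end Nat

theorem stmt_0 (n : ℕ) (hn : 1 ≤ n) :
    (Nat.fib (n + 1) : ℤ) ^ 3 + (Nat.fib n : ℤ) ^ 3 - (Nat.fib (n - 1) : ℤ) ^ 3 =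
      Nat.fib (3 * n) := by
  obtain ⟨m, rfl⟩ := Nat.exists_eq_add_of_le' hn
  rw [Nat.add_sub_cancel, show 3 * (m + 1) = 3 * m + 3 by ring, sub_eq_iff_eq_add]
  exact_mod_cast Nat.fib_add_two_pow_three_add_fib_add_one_pow_three m
end

section
/- For every integer n ≥ 0, 5·F_n^3 = F_{3n} - 3·(-1)^n·F_n. -/
/-!
Put `a = F n`, `b = F (n + 1)`. The addition formula `F (n + 2n) = F (n - 1) F (2n) + F n F (2n + 1)`
and the doubling formulas express `F (3n)` as the cubic form `2a³ + 3ab² - 3a²b`, while Cassini's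
identity reads `b² - ab - a² = (-1)ⁿ`; subtracting `3a` times the latter leaves `5a³`.
Working with `Int.fib` makes every step an identity in `ℤ` valid for all integers `n`.
-/

namespace Int

theorem fib_sub_one (n : ℤ) : fib (n - 1) = fib (n + 1) - fib n := by
  have h := fib_add_two (n - 1)
  rw [sub_add_cancel, show n - 1 + 2 = n + 1 by ring] at h
  linarith

theorem fib_three_mul (n : ℤ) :
    fib (3 * n) = 2 * fib n ^ 3 + 3 * fib n * fib (n + 1) ^ 2 - 3 * fib n ^ 2 * fib (n + 1) := by
  rw [show 3 * n = n + 2 * n by ring, fib_add, fib_sub_one, fib_two_mul, fib_two_mul_add_one]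
  ring

theorem fib_succ_sq_sub_fib_succ_mul_fib_sub_fib_sq (n : ℤ) :
    fib (n + 1) ^ 2 - fib (n + 1) * fib n - fib n ^ 2 = (-1) ^ n.natAbs := by
  rw [← fib_succ_mul_fib_pred_sub_fib_sq, fib_sub_one]
  ring

theorem five_mul_fib_pow_three (n : ℤ) :
    5 * fib n ^ 3 = fib (3 * n) - 3 * (-1) ^ n.natAbs * fib n := by
  rw [fib_three_mul, ← fib_succ_sq_sub_fib_succ_mul_fib_sub_fib_sq]
  ring

end Int

theorem stmt_1 (n : ℕ) :
    5 * (Nat.fib n : ℤ) ^ 3 = (Nat.fib (3 * n) : ℤ) - 3 * (-1) ^ n * Nat.fib n := by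
  simpa [← Int.fib_natCast] using Int.five_mul_fib_pow_three n
end

section
/- For every integer n ≥ 0, 4·∑_{k=0}^{n} F_{2k+1}^3 = F_{2n+2}^3 + 3·F_{2n+2}. -/
lemma cassini (n : ℕ) :
    (Nat.fib (n+1) : ℤ)^2 - Nat.fib n * Nat.fib (n+1) - (Nat.fib n : ℤ)^2 = (-1)^n := by
  induction n with
  | zero => simp
  | succ m ih =>
    have h : (Nat.fib (m+2) : ℤ) = Nat.fib m + Nat.fib (m+1) := by
      rw [Nat.fib_add_two]; push_cast; ring
    rw [h]; linear_combination -ih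

theorem stmt_6 (n : ℕ) :
    4 * ∑ k ∈ Finset.range (n + 1), (Nat.fib (2 * k + 1) : ℤ) ^ 3 =
      (Nat.fib (2 * n + 2) : ℤ) ^ 3 + 3 * Nat.fib (2 * n + 2) := by
  induction n with
  | zero => simp
  | succ m ih =>
    rw [Finset.sum_range_succ, mul_add, ih]
    have h1 : 2 * (m + 1) + 2 = 2 * m + 2 + 2 := by ring
    have h2 : 2 * (m + 1) + 1 = 2 * m + 2 + 1 := by ring
    have hf : (Nat.fib (2*m+2+2) : ℤ) = Nat.fib (2*m+2) + Nat.fib (2*m+2+1) := by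
      rw [Nat.fib_add_two]; push_cast; ring
    have hc := cassini (2*m+2)
    rw [h1, h2, hf]
    have : ((-1:ℤ))^(2*m+2) = 1 := by
      rw [pow_add]; simp [pow_mul]
    rw [this] at hc
    nlinarith [hc]
end

section
/- For every integer n ≥ 1, 4·∑_{k=1}^{n} F_{2k}^3 = (F_{2n+1} - 1)^2·(F_{2n+1} + 2). -/
/-!
With `f t = (t - 1) ^ 2 * (t + 2) = t ^ 3 - 3 * t + 2`, the claim telescopes: it suffices that
`f (F (2n+3)) - f (F (2n+1)) = 4 * F (2n+2) ^ 3`. Writing `x = F (2n+1)`, `y = F (2n+3)`, we have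
`f y - f x = (y - x) * ((y - x) ^ 2 + 3 * x * y - 3)`, with `y - x = F (2n+2)`, and Cassini's identity
`F (2n+2) ^ 2 + 1 = x * y` turns the second factor into `4 * F (2n+2) ^ 2`.
-/

lemma fib_two_mul_add_two_sq_add_one (n : ℕ) :
    (Nat.fib (2 * n + 2) : ℤ) ^ 2 + 1 = Nat.fib (2 * n + 1) * Nat.fib (2 * n + 3) := by
  have h := Int.fib_succ_mul_fib_pred_sub_fib_sq ((2 * n + 2 : ℕ) : ℤ)
  rw [Int.natAbs_natCast, Even.neg_one_pow ⟨n + 1, by ring⟩,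
    show ((2 * n + 2 : ℕ) : ℤ) + 1 = ((2 * n + 3 : ℕ) : ℤ) by push_cast; ring,
    show ((2 * n + 2 : ℕ) : ℤ) - 1 = ((2 * n + 1 : ℕ) : ℤ) by push_cast; ring] at h
  simp only [Int.fib_natCast] at h
  linarith

lemma sub_one_sq_mul_add_two_sub_sub_one_sq_mul_add_two {R : Type*} [CommRing R] {x y : R}
    (h : (y - x) ^ 2 + 1 = x * y) :
    (y - 1) ^ 2 * (y + 2) - (x - 1) ^ 2 * (x + 2) = 4 * (y - x) ^ 3 := by
  linear_combination (-3 * (y - x)) * h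

theorem stmt_7_general (n : ℕ) :
    4 * ∑ k ∈ Finset.Icc 1 n, (Nat.fib (2 * k) : ℤ) ^ 3 =
      ((Nat.fib (2 * n + 1) : ℤ) - 1) ^ 2 * ((Nat.fib (2 * n + 1) : ℤ) + 2) := by
  induction n with
  | zero => simp
  | succ n ih =>
    have hdiff : (Nat.fib (2 * n + 3) : ℤ) - Nat.fib (2 * n + 1) = Nat.fib (2 * n + 2) := by
      rw [Nat.fib_add_two (n := 2 * n + 1)]; push_cast; ring
    have hstep := sub_one_sq_mul_add_two_sub_sub_one_sq_mul_add_two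
      (by rw [hdiff]; exact fib_two_mul_add_two_sq_add_one n)
    rw [hdiff] at hstep
    rw [Finset.sum_Icc_succ_top (by omega), mul_add, ih,
      show 2 * (n + 1) + 1 = 2 * n + 3 by ring, show 2 * (n + 1) = 2 * n + 2 by ring]
    linarith

theorem stmt_7 (n : ℕ) (hn : 1 ≤ n) :
    4 * ∑ k ∈ Finset.Icc 1 n, (Nat.fib (2 * k) : ℤ) ^ 3 =
      ((Nat.fib (2 * n + 1) : ℤ) - 1) ^ 2 * ((Nat.fib (2 * n + 1) : ℤ) + 2) :=
  stmt_7_general n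
end

section
/- For every integer n ≥ 0, 2·∑_{k=0}^{n} (-1)^k·F_k·F_{k+1}^2 = (-1)^n·F_n·F_{n+1}·F_{n+2}. -/
/-!
Write `P n = F n * F (n+1) * F (n+2)`. Since `F (n+3) + F n = 2 * F (n+2)`, consecutive products
satisfy `P (n+1) + P n = 2 * F (n+1) * F (n+2) ^ 2`, so the alternating sum telescopes.
-/

theorem Nat.fib_add_three_add_fib (n : ℕ) : fib (n + 3) + fib n = 2 * fib (n + 2) := by
  simp only [fib_add_two]
  ring

theorem Nat.fib_mul_fib_mul_fib_add_succ (n : ℕ) :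
    fib (n + 1) * fib (n + 2) * fib (n + 3) + fib n * fib (n + 1) * fib (n + 2) =
      2 * fib (n + 1) * fib (n + 2) ^ 2 := by
  linear_combination fib (n + 1) * fib (n + 2) * fib_add_three_add_fib n

theorem stmt_10 (n : ℕ) :
    2 * ∑ k ∈ Finset.range (n + 1), (-1) ^ k * (Nat.fib k : ℤ) * (Nat.fib (k + 1) : ℤ) ^ 2 =
      (-1) ^ n * (Nat.fib n : ℤ) * Nat.fib (n + 1) * Nat.fib (n + 2) := by
  induction n with
  | zero => simp
  | succ n ih =>
    have h : (Nat.fib (n + 1) * Nat.fib (n + 2) * Nat.fib (n + 3) +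
        Nat.fib n * Nat.fib (n + 1) * Nat.fib (n + 2) : ℤ) =
        2 * Nat.fib (n + 1) * Nat.fib (n + 2) ^ 2 := by
      exact_mod_cast Nat.fib_mul_fib_mul_fib_add_succ n
    rw [Finset.sum_range_succ, mul_add, ih]
    linear_combination (-1) ^ n * h
end

section
/- For every integer n ≥ 0, 2·∑_{k=0}^{n} (-1)^k·F_{k+1}^3 = (-1)^n·(F_{n+1}^2·F_{n+4} - F_n·F_{n+2}·F_{n+3}) - 1. -/
/-!
Write `G n` (`fibCubeSumTerm n`) for `F_{n+1}^2 F_{n+4} - F_n F_{n+2} F_{n+3}`. Expanding everything in `F_n` and `F_{n+1}`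
gives `G (n+1) + G n = 2 F_{n+2}^3`, so both sides of the identity have the same increments
`2 (-1)^{n+1} F_{n+2}^3`; at `n = 0` both equal `2`, since `G 0 = 3`.
-/

open Nat

def fibCubeSumTerm (n : ℕ) : ℤ :=
  (fib (n + 1) : ℤ) ^ 2 * fib (n + 4) - (fib n : ℤ) * fib (n + 2) * fib (n + 3)

lemma fibCubeSumTerm_succ_add (n : ℕ) :
    fibCubeSumTerm (n + 1) + fibCubeSumTerm n = 2 * (fib (n + 2) : ℤ) ^ 3 := by
  have hfib (m : ℕ) : (fib (m + 2) : ℤ) = fib m + fib (m + 1) := mod_cast fib_add_two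
  simp only [fibCubeSumTerm, hfib (n + 3), hfib (n + 2), hfib (n + 1), hfib n]
  ring

theorem stmt_11 (n : ℕ) :
    2 * ∑ k ∈ Finset.range (n + 1), (-1) ^ k * (Nat.fib (k + 1) : ℤ) ^ 3 =
      (-1) ^ n * ((Nat.fib (n + 1) : ℤ) ^ 2 * Nat.fib (n + 4) -
        (Nat.fib n : ℤ) * Nat.fib (n + 2) * Nat.fib (n + 3)) - 1 := by
  change _ = (-1) ^ n * fibCubeSumTerm n - 1
  induction n with
  | zero => decide
  | succ m ih =>
    rw [Finset.sum_range_succ, mul_add, ih, mul_left_comm, ← fibCubeSumTerm_succ_add m]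
    ring
end

section
/- For every integer n ≥ 0, F_{n+4}^3 + 3·F_{n+1}^3 + F_n^3 = 3·F_{n+3}^3 + 6·F_{n+2}^3. -/
/-! The cubes of any sequence with `f (n + 2) = f n + f (n + 1)` satisfy the linear recurrence with
characteristic polynomial `(X ^ 2 - 4 * X - 1) * (X ^ 2 + X - 1) = X ^ 4 - 3 * X ^ 3 - 6 * X ^ 2 + 3 * X + 1`,
whose roots `φ ^ 3`, `ψ ^ 3`, `φ ^ 2 * ψ = -φ`, `φ * ψ ^ 2 = -ψ` are the products of three roots of
`X ^ 2 - X - 1`. Concretely, everything is a polynomial identity in `f n` and `f (n + 1)`. -/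

theorem cube_recurrence_of_add_two {R : Type*} [CommRing R] {f : ℕ → R}
    (hf : ∀ n, f (n + 2) = f n + f (n + 1)) (n : ℕ) :
    f (n + 4) ^ 3 + 3 * f (n + 1) ^ 3 + f n ^ 3 = 3 * f (n + 3) ^ 3 + 6 * f (n + 2) ^ 3 := by
  rw [hf (n + 2), hf (n + 1), hf n]
  ring

theorem stmt_12 (n : ℕ) :
    (Nat.fib (n + 4) : ℤ) ^ 3 + 3 * (Nat.fib (n + 1) : ℤ) ^ 3 + (Nat.fib n : ℤ) ^ 3 =
      3 * (Nat.fib (n + 3) : ℤ) ^ 3 + 6 * (Nat.fib (n + 2) : ℤ) ^ 3 :=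
  cube_recurrence_of_add_two (f := fun k => (Nat.fib k : ℤ))
    (fun _ => mod_cast Nat.fib_add_two) n
end

section
/- For all integers r ≥ 1, s ≥ 1, and t ≥ 1, F_{r+1}·F_{s+1}·F_{t+1} + F_r·F_s·F_t - F_{r-1}·F_{s-1}·F_{t-1} = F_{r+s+t}. -/
/-! Expanding `F (a + b + c + 3)` with the addition formula
`F (m + n + 1) = F m F n + F (m + 1) F (n + 1)`, first at `(a + b + 1) + (c + 1)` and then at
`a + b` and `a + (b + 1)`, and eliminating the top indices with the recurrence, leaves a ring
identity. -/

theorem fib_add_add_add_three (a b c : ℕ) :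
    (Nat.fib (a + b + c + 3) : ℤ) =
      Nat.fib (a + 2) * Nat.fib (b + 2) * Nat.fib (c + 2) +
        Nat.fib (a + 1) * Nat.fib (b + 1) * Nat.fib (c + 1) -
        Nat.fib a * Nat.fib b * Nat.fib c := by
  have h_outer := Nat.fib_add (a + b + 1) (c + 1)
  have h_low := Nat.fib_add a b
  have h_high := Nat.fib_add a (b + 1)
  rw [show a + b + 1 + (c + 1) + 1 = a + b + c + 3 by ring] at h_outer
  rw [show a + (b + 1) + 1 = a + b + 1 + 1 by ring] at h_high
  rw [h_outer, h_high, h_low]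
  simp only [Nat.fib_add_two]
  push_cast
  ring

theorem stmt_13 (r s t : ℕ) (hr : 1 ≤ r) (hs : 1 ≤ s) (ht : 1 ≤ t) :
    (Nat.fib (r + 1) : ℤ) * Nat.fib (s + 1) * Nat.fib (t + 1) +
      (Nat.fib r : ℤ) * Nat.fib s * Nat.fib t -
      (Nat.fib (r - 1) : ℤ) * Nat.fib (s - 1) * Nat.fib (t - 1) =
      Nat.fib (r + s + t) := by
  obtain ⟨a, rfl⟩ := Nat.exists_eq_add_of_le' hr
  obtain ⟨b, rfl⟩ := Nat.exists_eq_add_of_le' hs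
  obtain ⟨c, rfl⟩ := Nat.exists_eq_add_of_le' ht
  rw [show a + 1 + (b + 1) + (c + 1) = a + b + c + 3 by ring, fib_add_add_add_three]
  simp only [Nat.add_sub_cancel]
end

section
/- For all integers n ≥ 0, a ≥ 0, b ≥ 0, and c ≥ 0, F_{n+a}·F_{n+b}·F_{n+c} - F_n·F_{n+a}·F_{n+b+c} + F_n·F_{n+b}·F_{n+c+a} - F_n·F_{n+c}·F_{n+a+b} = (-1)^n·(F_a·F_b·F_{n+c} - F_c·F_a·F_{n+b} + F_b·F_c·F_{n+a}). -/
/-!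
Expand every Fibonacci number with an index `n + x` by the addition formula
`F (n + x) = F (n - 1) * F x + F n * F (x + 1)`, and `F (n + x + y)` by applying it twice.
Both sides become polynomials in `F (n - 1), F n` and `F (x - 1), F x` for `x = a, b, c`, whose
difference is a multiple of `F (n + 1) * F (n - 1) - F n ^ 2 - (-1) ^ |n|`; this vanishes by
Cassini's identity. Over `Int.fib` the argument works for all integer indices.
-/

namespace Int

theorem fib_add_one_eq_fib_sub_one_add (x : ℤ) : fib (x + 1) = fib (x - 1) + fib x := by
  simpa [show x - 1 + 2 = x + 1 by ring] using fib_add_two (x - 1)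

theorem fib_add_add (n x y : ℤ) :
    fib (n + x + y) = fib (n - 1) * (fib (x - 1) * fib y + fib x * fib (y + 1))
      + fib n * (fib x * fib y + fib (x + 1) * fib (y + 1)) := by
  rw [add_assoc, fib_add n, fib_add x, show x + y + 1 = (x + 1) + y by ring, fib_add (x + 1),
    add_sub_cancel_right]

theorem fib_triple_product_identity (n a b c : ℤ) :
    fib (n + a) * fib (n + b) * fib (n + c) - fib n * fib (n + a) * fib (n + b + c)
      + fib n * fib (n + b) * fib (n + c + a) - fib n * fib (n + c) * fib (n + a + b) =
      (-1) ^ n.natAbs * (fib a * fib b * fib (n + c) - fib c * fib a * fib (n + b)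
        + fib b * fib c * fib (n + a)) := by
  have cassini := fib_succ_mul_fib_pred_sub_fib_sq n
  rw [fib_add_add n b c, fib_add_add n c a, fib_add_add n a b, fib_add n a, fib_add n b,
    fib_add n c]
  simp only [fib_add_one_eq_fib_sub_one_add] at cassini ⊢
  rw [← cassini]
  ring

end Int

theorem stmt_14 (n a b c : ℕ) :
    (Nat.fib (n + a) : ℤ) * Nat.fib (n + b) * Nat.fib (n + c) -
      (Nat.fib n : ℤ) * Nat.fib (n + a) * Nat.fib (n + b + c) +
      (Nat.fib n : ℤ) * Nat.fib (n + b) * Nat.fib (n + c + a) -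
      (Nat.fib n : ℤ) * Nat.fib (n + c) * Nat.fib (n + a + b) =
      (-1) ^ n * ((Nat.fib a : ℤ) * Nat.fib b * Nat.fib (n + c) -
        (Nat.fib c : ℤ) * Nat.fib a * Nat.fib (n + b) +
        (Nat.fib b : ℤ) * Nat.fib c * Nat.fib (n + a)) := by
  simpa only [← Nat.cast_add, Int.fib_natCast, Int.natAbs_natCast] using
    Int.fib_triple_product_identity n a b c
end

section
/- For all integers k ≥ 0, r ≥ 0, m ≥ 0, and n ≥ 0, F_m^k·F_n = (-1)^{kr}·∑_{h=0}^{k} C(k,h)·(-1)^h·F_r^h·F_{r+m}^{k-h}·F_{n+kr+hm}, where C(k,h) denotes the binomial coefficient. -/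
/-!
Binet's formula turns the identity into one about powers of `φ` and `ψ`. The key fact is
`F_{r+m} - F_r φ^m = F_m ψ^r` (and its conjugate): raising it to the `k`-th power and expanding
binomially, then multiplying by `φ^{n+kr}`, produces the `φ`-part of the right-hand side, while the
left becomes `F_m^k (φψ)^{kr} φ^n = (-1)^{kr} F_m^k φ^n`. Subtracting the conjugate equation and
dividing by `√5` gives the claim.
-/

open Finset goldenRatio

theorem pow_mul_sub_mul_pow_pow_eq_sum {R : Type*} [CommRing R] (a b x : R) (N m k : ℕ) :
    x ^ N * (a - b * x ^ m) ^ k =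
      ∑ h ∈ range (k + 1), (k.choose h : R) * (-1) ^ h * b ^ h * a ^ (k - h) * x ^ (N + h * m) := by
  rw [sub_eq_neg_add, add_pow, mul_sum]
  refine sum_congr rfl fun h _ => ?_
  ring

theorem Real.fib_add_sub_fib_mul_goldenRatio_pow (r m : ℕ) :
    (Nat.fib (r + m) : ℝ) - Nat.fib r * φ ^ m = Nat.fib m * ψ ^ r := by
  have : √5 ≠ 0 := by positivity
  rw [coe_fib_eq, coe_fib_eq, coe_fib_eq, pow_add]
  field_simp
  ring

theorem Real.fib_add_sub_fib_mul_goldenConj_pow (r m : ℕ) :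
    (Nat.fib (r + m) : ℝ) - Nat.fib r * ψ ^ m = Nat.fib m * φ ^ r := by
  have : √5 ≠ 0 := by positivity
  rw [coe_fib_eq, coe_fib_eq, coe_fib_eq, pow_add]
  field_simp
  ring

theorem Real.sum_mul_fib_eq {ι : Type*} (s : Finset ι) (c : ι → ℝ) (e : ι → ℕ) :
    ∑ i ∈ s, c i * Nat.fib (e i) =
      (∑ i ∈ s, c i * φ ^ e i - ∑ i ∈ s, c i * ψ ^ e i) / √5 := by
  simp only [coe_fib_eq, ← sum_sub_distrib, sum_div, mul_div_assoc', mul_sub]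

theorem Nat.neg_one_pow_mul_fib_pow_mul_fib (k r m n : ℕ) :
    (-1) ^ (k * r) * (fib m : ℤ) ^ k * fib n =
      ∑ h ∈ range (k + 1), (k.choose h : ℤ) * (-1) ^ h * (fib r : ℤ) ^ h *
        (fib (r + m) : ℤ) ^ (k - h) * fib (n + k * r + h * m) := by
  rw [← Int.cast_inj (α := ℝ)]
  push_cast
  have hφψ : (-1 : ℝ) ^ (k * r) = φ ^ (k * r) * ψ ^ (k * r) := by
    rw [← mul_pow, Real.goldenRatio_mul_goldenConj]
  have hφ := pow_mul_sub_mul_pow_pow_eq_sum (fib (r + m) : ℝ) (fib r) φ (n + k * r) m k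
  have hψ := pow_mul_sub_mul_pow_pow_eq_sum (fib (r + m) : ℝ) (fib r) ψ (n + k * r) m k
  rw [Real.fib_add_sub_fib_mul_goldenRatio_pow] at hφ
  rw [Real.fib_add_sub_fib_mul_goldenConj_pow] at hψ
  rw [Real.sum_mul_fib_eq, ← hφ, ← hψ, Real.coe_fib_eq n, hφψ]
  ring

theorem stmt_15 (k r m n : ℕ) :
    (Nat.fib m : ℤ) ^ k * Nat.fib n =
      (-1) ^ (k * r) * ∑ h ∈ Finset.range (k + 1),
        (Nat.choose k h : ℤ) * (-1) ^ h * (Nat.fib r : ℤ) ^ h *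
          (Nat.fib (r + m) : ℤ) ^ (k - h) * Nat.fib (n + k * r + h * m) := by
  have hsq : ((-1 : ℤ) ^ (k * r)) ^ 2 = 1 := by simp [← pow_mul]
  rw [← Nat.neg_one_pow_mul_fib_pow_mul_fib]
  linear_combination -(↑(Nat.fib m) ^ k * ↑(Nat.fib n) : ℤ) * hsq
end

section
/- For every integer n ≥ 0, F_{n+1}·F_{n+2}·F_{n+6} - F_{n+3}^3 = (-1)^n·F_n. -/
/-!
Write `a = F_n`, `b = F_{n+1}`. By `F_{n+k+1} = F_k F_n + F_{k+1} F_{n+1}` the left side is the cubic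
`b (a + b) (5a + 8b) - (a + 2b)^3 = a (b^2 - a b - a^2)`, and Cassini's identity says
`b^2 - a b - a^2 = (-1)^n`.
-/

lemma Nat.fib_add_two_mul_fib_sub_fib_add_one_sq (n : ℕ) :
    (Nat.fib (n + 2) : ℤ) * Nat.fib n - (Nat.fib (n + 1) : ℤ) ^ 2 = (-1) ^ (n + 1) := by
  have h := Int.fib_succ_mul_fib_pred_sub_fib_sq ((n + 1 : ℕ) : ℤ)
  rwa [Int.natAbs_natCast, show ((n + 1 : ℕ) : ℤ) + 1 = ((n + 2 : ℕ) : ℤ) by push_cast; ring,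
    show ((n + 1 : ℕ) : ℤ) - 1 = n by push_cast; ring] at h

theorem stmt_18 (n : ℕ) :
    (Nat.fib (n + 1) : ℤ) * Nat.fib (n + 2) * Nat.fib (n + 6) - (Nat.fib (n + 3) : ℤ) ^ 3 =
      (-1) ^ n * Nat.fib n := by
  have h2 : Nat.fib (n + 2) = Nat.fib n + Nat.fib (n + 1) := Nat.fib_add_two
  have h3 : Nat.fib (n + 3) = Nat.fib n + 2 * Nat.fib (n + 1) := by
    rw [Nat.fib_add n 2, show Nat.fib 2 = 1 from rfl, show Nat.fib (2 + 1) = 2 from rfl]; ring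
  have h6 : Nat.fib (n + 6) = 5 * Nat.fib n + 8 * Nat.fib (n + 1) := by
    rw [Nat.fib_add n 5, show Nat.fib 5 = 5 from rfl, show Nat.fib (5 + 1) = 8 from rfl]; ring
  have cassini := Nat.fib_add_two_mul_fib_sub_fib_add_one_sq n
  push_cast [h2, h3, h6] at cassini ⊢
  linear_combination -(Nat.fib n : ℤ) * cassini
end
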